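/- The following integral identities hold: (i) for every x ∈ (0, 1/√2], (1/x³)·∫₀ˣ (1−t²)^{−5/2}·(x²−t²) dt = (2/3)·(1−x²)^{−1/2}; (ii) for every x ∈ [1/√2, 1], (1/x³)·( ∫₀^{1/√2} (1−t²)^{−5/2}·(x²−t²) dt + ∫_{1/√2}^{x} t^{−5}·(x²−t²) dt ) = (3 − 16x² + 28x⁴)/(12x⁵). -/

import Mathlib

open Set

lemma intA_aux (x b : ℝ) (hb0 : 0 ≤ b) (hb1 : b < 1) :
    (∫ t in (0:ℝ)..b, (1 - t ^ 2) ^ (-(5:ℝ)/2) * (x ^ 2 - t ^ 2))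
      = (x^2-1)*(b - 2/3*b^3)*(1-b^2) ^ (-(3:ℝ)/2) + b*(1-b^2) ^ (-(1:ℝ)/2) := by
  have key : ∀ t ∈ Set.uIcc (0:ℝ) b, 0 < 1 - t^2 := by
    intro t ht
    rw [Set.uIcc_of_le hb0] at ht
    nlinarith [ht.1, ht.2]
  set F : ℝ → ℝ := fun t => (x^2-1)*(t - 2/3*t^3)*(1-t^2) ^ (-(3:ℝ)/2)
      + t*(1-t^2) ^ (-(1:ℝ)/2) with hF
  have hderiv : ∀ t ∈ Set.uIcc (0:ℝ) b,
      HasDerivAt F ((1 - t ^ 2) ^ (-(5:ℝ)/2) * (x ^ 2 - t ^ 2)) t := by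
    intro t ht
    have hs := key t ht
    have hbase : HasDerivAt (fun t : ℝ => 1 - t^2) (-(2*t)) t := by
      simpa using ((hasDerivAt_pow 2 t).const_sub 1)
    have h32 : HasDerivAt (fun t : ℝ => (1-t^2) ^ (-(3:ℝ)/2))
        ((-(3:ℝ)/2) * (1-t^2) ^ (-(3:ℝ)/2 - 1) * (-(2*t))) t :=
      by have := (Real.hasDerivAt_rpow_const (p := -(3:ℝ)/2) (Or.inl hs.ne')).comp t hbase; exact this
    have h12 : HasDerivAt (fun t : ℝ => (1-t^2) ^ (-(1:ℝ)/2))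
        ((-(1:ℝ)/2) * (1-t^2) ^ (-(1:ℝ)/2 - 1) * (-(2*t))) t :=
      by have := (Real.hasDerivAt_rpow_const (p := -(1:ℝ)/2) (Or.inl hs.ne')).comp t hbase; exact this
    have hf1 : HasDerivAt (fun t : ℝ => (x^2-1)*(t - 2/3*t^3))
        ((x^2-1)*(1 - 2*t^2)) t := by
      have := ((hasDerivAt_id t).sub ((hasDerivAt_pow 3 t).const_mul (2/3:ℝ))).const_mul
        (x^2-1)
      exact this.congr_deriv (by ring)
    have htot := (hf1.mul h32).add ((hasDerivAt_id t).mul h12)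
    refine htot.congr_deriv ?_
    have e32 : (1-t^2) ^ (-(3:ℝ)/2) = (1-t^2) * (1-t^2) ^ (-(5:ℝ)/2) := by
      rw [show (-(3:ℝ)/2) = 1 + (-(5:ℝ)/2) by norm_num, Real.rpow_add hs, Real.rpow_one]
    have e52 : (1-t^2) ^ (-(3:ℝ)/2 - 1) = (1-t^2) ^ (-(5:ℝ)/2) := by
      norm_num
    have e12 : (1-t^2) ^ (-(1:ℝ)/2 - 1) = (1-t^2) * (1-t^2) ^ (-(5:ℝ)/2) := by
      rw [show (-(1:ℝ)/2 - 1) = 1 + (-(5:ℝ)/2) by norm_num, Real.rpow_add hs, Real.rpow_one]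
    have e12b : (1-t^2) ^ (-(1:ℝ)/2) = (1-t^2)^2 * (1-t^2) ^ (-(5:ℝ)/2) := by
      rw [show (-(1:ℝ)/2) = 2 + (-(5:ℝ)/2) by norm_num, Real.rpow_add hs]
      congr 1
      rw [← Real.rpow_natCast (1-t^2) 2]; norm_num
    rw [e32, e52, e12, e12b]
    simp only [id_eq]
    ring
  have hcont : ContinuousOn (fun t : ℝ => (1 - t ^ 2) ^ (-(5:ℝ)/2) * (x ^ 2 - t ^ 2))
      (Set.uIcc (0:ℝ) b) := by
    apply ContinuousOn.mul
    · exact ContinuousOn.rpow_const (by fun_prop) (fun t ht => Or.inl (key t ht).ne')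
    · fun_prop
  rw [intervalIntegral.integral_eq_sub_of_hasDerivAt hderiv hcont.intervalIntegrable]
  have hF0 : F 0 = 0 := by simp [hF]
  rw [hF0, sub_zero]

lemma intB_aux (x a b : ℝ) (ha : 0 < a) (hb : 0 < b) :
    (∫ t in a..b, t ^ (-(5:ℝ)) * (x ^ 2 - t ^ 2))
      = (-(x^2)/4 * b ^ (-(4:ℝ)) + 1/2 * b ^ (-(2:ℝ)))
        - (-(x^2)/4 * a ^ (-(4:ℝ)) + 1/2 * a ^ (-(2:ℝ))) := by
  have key : ∀ t ∈ Set.uIcc a b, 0 < t := fun t ht =>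
    lt_of_lt_of_le (lt_min ha hb) ht.1
  set G : ℝ → ℝ := fun t => -(x^2)/4 * t ^ (-(4:ℝ)) + 1/2 * t ^ (-(2:ℝ)) with hG
  have hderiv : ∀ t ∈ Set.uIcc a b,
      HasDerivAt G (t ^ (-(5:ℝ)) * (x ^ 2 - t ^ 2)) t := by
    intro t ht
    have hpt := key t ht
    have h4 : HasDerivAt (fun t : ℝ => t ^ (-(4:ℝ))) ((-(4:ℝ)) * t ^ (-(4:ℝ) - 1)) t :=
      Real.hasDerivAt_rpow_const (Or.inl hpt.ne')
    have h2 : HasDerivAt (fun t : ℝ => t ^ (-(2:ℝ))) ((-(2:ℝ)) * t ^ (-(2:ℝ) - 1)) t :=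
      Real.hasDerivAt_rpow_const (Or.inl hpt.ne')
    have htot := (h4.const_mul (-(x^2)/4)).add (h2.const_mul (1/2:ℝ))
    refine htot.congr_deriv ?_
    have e4 : t ^ (-(4:ℝ) - 1) = t ^ (-(5:ℝ)) := by norm_num
    have e2 : t ^ (-(2:ℝ) - 1) = t^2 * t ^ (-(5:ℝ)) := by
      rw [show (-(2:ℝ) - 1) = 2 + (-(5:ℝ)) by norm_num, Real.rpow_add hpt]
      congr 1
      rw [← Real.rpow_natCast t 2]; norm_num
    rw [e4, e2]
    ring
  have hcont : ContinuousOn (fun t : ℝ => t ^ (-(5:ℝ)) * (x ^ 2 - t ^ 2))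
      (Set.uIcc a b) := by
    apply ContinuousOn.mul
    · exact ContinuousOn.rpow_const continuousOn_id
        (fun t ht => Or.inl (key t ht).ne')
    · fun_prop
  rw [intervalIntegral.integral_eq_sub_of_hasDerivAt hderiv hcont.intervalIntegrable]

/-- The integral identities computing (up to the normalizing constant of the
spherical Radon transform) the radial function of the intersection body in `ℝ⁶`
of the cylinder:
(i) for `x ∈ (0, 1/√2]`,
`x⁻³ ∫₀ˣ (1−t²)^{−5/2}(x²−t²) dt = (2/3)(1−x²)^{−1/2}`;
(ii) for `x ∈ [1/√2, 1]`,
`x⁻³ (∫₀^{1/√2} (1−t²)^{−5/2}(x²−t²) dt + ∫_{1/√2}^x t^{−5}(x²−t²) dt)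
  = (3 − 16x² + 28x⁴)/(12x⁵)`. -/
theorem cylinder_intersection_body_radial_integrals :
    (∀ x ∈ Ioc (0 : ℝ) (Real.sqrt 2)⁻¹,
      (1 / x ^ 3) * ∫ t in (0 : ℝ)..x, (1 - t ^ 2) ^ (-(5 : ℝ) / 2) * (x ^ 2 - t ^ 2) =
        (2 / 3) * (Real.sqrt (1 - x ^ 2))⁻¹) ∧
    (∀ x ∈ Icc ((Real.sqrt 2)⁻¹ : ℝ) 1,
      (1 / x ^ 3) *
        ((∫ t in (0 : ℝ)..(Real.sqrt 2)⁻¹, (1 - t ^ 2) ^ (-(5 : ℝ) / 2) * (x ^ 2 - t ^ 2))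
          + ∫ t in ((Real.sqrt 2)⁻¹ : ℝ)..x, t ^ (-(5 : ℝ)) * (x ^ 2 - t ^ 2)) =
        (3 - 16 * x ^ 2 + 28 * x ^ 4) / (12 * x ^ 5)) := by
  have hs2 : (1:ℝ) < Real.sqrt 2 := by
    rw [show (1:ℝ) = Real.sqrt 1 by simp]
    exact Real.sqrt_lt_sqrt (by norm_num) (by norm_num)
  have ha1 : (Real.sqrt 2)⁻¹ < 1 := inv_lt_one_of_one_lt₀ hs2
  have ha0 : (0:ℝ) < (Real.sqrt 2)⁻¹ := by positivity
  have ha2 : ((Real.sqrt 2)⁻¹ : ℝ) ^ 2 = 1/2 := by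
    rw [inv_pow, Real.sq_sqrt (by norm_num : (2:ℝ) ≥ 0)]
    norm_num
  constructor
  · rintro x ⟨hx0, hxa⟩
    have hx1 : x < 1 := lt_of_le_of_lt hxa ha1
    have hs : 0 < 1 - x^2 := by nlinarith
    rw [intA_aux x x hx0.le hx1]
    have e32 : (1-x^2) ^ (-(3:ℝ)/2) = (1-x^2)⁻¹ * (1-x^2) ^ (-(1:ℝ)/2) := by
      rw [show (-(3:ℝ)/2) = (-1) + (-(1:ℝ)/2) by norm_num, Real.rpow_add hs,
        Real.rpow_neg_one]
    have e12 : (1-x^2) ^ (-(1:ℝ)/2) = (Real.sqrt (1 - x ^ 2))⁻¹ := by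
      rw [show (-(1:ℝ)/2) = -(1/2:ℝ) by norm_num, Real.rpow_neg hs.le,
        ← Real.sqrt_eq_rpow]
    rw [e32, e12]
    have hsq : Real.sqrt (1 - x^2) ≠ 0 := by positivity
    field_simp
    ring
  · rintro x ⟨hax, hx1⟩
    have hx0 : 0 < x := lt_of_lt_of_le ha0 hax
    rw [intA_aux x (Real.sqrt 2)⁻¹ ha0.le ha1, intB_aux x (Real.sqrt 2)⁻¹ x ha0 hx0]
    have h12 : (1 - ((Real.sqrt 2)⁻¹:ℝ)^2) = 1/2 := by rw [ha2]; norm_num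
    have p1 : ((1:ℝ)/2) ^ (-(1:ℝ)/2) = Real.sqrt 2 := by
      rw [show (-(1:ℝ)/2) = -(1/2:ℝ) by norm_num, Real.rpow_neg (by norm_num),
        ← Real.sqrt_eq_rpow, show ((1:ℝ)/2) = 2⁻¹ by norm_num, Real.sqrt_inv, inv_inv]
    have p3 : ((1:ℝ)/2) ^ (-(3:ℝ)/2) = 2 * Real.sqrt 2 := by
      rw [show (-(3:ℝ)/2) = (-1) + (-(1:ℝ)/2) by norm_num,
        Real.rpow_add (by norm_num : (0:ℝ) < 1/2), Real.rpow_neg_one, p1]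
      norm_num
    have ea4 : ((Real.sqrt 2)⁻¹:ℝ) ^ (-(4:ℝ)) = 4 := by
      rw [show (-(4:ℝ)) = -((4:ℕ):ℝ) by norm_num, Real.rpow_neg ha0.le,
        Real.rpow_natCast, show (4:ℕ) = 2*2 from rfl, pow_mul, ha2]
      norm_num
    have ea2 : ((Real.sqrt 2)⁻¹:ℝ) ^ (-(2:ℝ)) = 2 := by
      rw [show (-(2:ℝ)) = -((2:ℕ):ℝ) by norm_num, Real.rpow_neg ha0.le,
        Real.rpow_natCast, ha2]
      norm_num
    have ex4 : x ^ (-(4:ℝ)) = (x^4)⁻¹ := by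
      rw [show (-(4:ℝ)) = -((4:ℕ):ℝ) by norm_num, Real.rpow_neg hx0.le, Real.rpow_natCast]
    have ex2 : x ^ (-(2:ℝ)) = (x^2)⁻¹ := by
      rw [show (-(2:ℝ)) = -((2:ℕ):ℝ) by norm_num, Real.rpow_neg hx0.le, Real.rpow_natCast]
    rw [h12, p1, p3, ea4, ea2, ex4, ex2]
    have hsq2 : Real.sqrt 2 ≠ 0 := by positivity
    have hmul : ((Real.sqrt 2)⁻¹:ℝ) * Real.sqrt 2 = 1 := inv_mul_cancel₀ hsq2
    have hcube : ((Real.sqrt 2)⁻¹:ℝ)^3 = (Real.sqrt 2)⁻¹ / 2 := by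
      rw [show (3:ℕ) = 2 + 1 by norm_num, pow_succ, ha2]
      ring
    rw [hcube]
    field_simp
    ring
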